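/- Let N = N_0 N_1, ω = exp(2πi/N), Q_M = QFT_M† C_M QFT_M with C_M = diag(0,…,M-1), D = diag(1, ω, …, ω^{N_1 - 1}) ∈ ℂ^{N_1×N_1}, and v_m = QFT_{N_0}† |m⟩. Then Q_N = N_0 ∑_{m=0}^{N_0-1} |v_m⟩⟨v_m| ⊗ ((D†)^m Q_{N_1} D^m) + Q_{N_0} ⊗ I_{N_1}. -/

import Mathlib

/-!
Entrywise, `Q_M j k = (1/M) ∑_t t ζ_M^{t(k-j)}` with `ζ_M = exp(2πi/M)`. For `N = N₀N₁` write
`j = N₁a + b`, `k = N₁c + d` and split the summation index in mixed radix, `t = m + N₀s`.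
Then `ζ_N^{t(k-j)} = ζ_{N₀}^{m(c-a)} ζ_N^{m(d-b)} ζ_{N₁}^{s(d-b)}`, and the weight `t = m + N₀s`
splits the sum in two. In the `m`-part the sum over `s` is the character sum `N₁ δ_{bd}`, which
leaves `Q_{N₀} ⊗ I`. In the `N₀s`-part the sum over `s` is `N₁ Q_{N₁} b d`; the twist
`ζ_N^{m(d-b)}` is conjugation by `D^m`, and `ζ_{N₀}^{m(c-a)} / N₀ = v_m(a) conj(v_m(c))`.
-/

open Matrix Kronecker

/-- The `M × M` quantum Fourier transform matrix, entries `ω_M^{jk}/√M`. -/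
noncomputable def qft (M : ℕ) : Matrix (Fin M) (Fin M) ℂ :=
  fun j k => Complex.exp (2 * Real.pi * Complex.I / M) ^ ((j : ℕ) * (k : ℕ)) / Real.sqrt M

/-- The QPE multiplier `Q_M = QFT_M† C_M QFT_M` with `C_M = diag(0, …, M-1)`. -/
noncomputable def qpeMult (M : ℕ) : Matrix (Fin M) (Fin M) ℂ :=
  (qft M)ᴴ * Matrix.diagonal (fun j : Fin M => ((j : ℕ) : ℂ)) * qft M

/-- Identification of `Fin N0 × Fin N1` with `Fin (N0 * N1)`, `(a, b) ↦ N1 * a + b`. -/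
def emb (N0 N1 : ℕ) (a : Fin N0) (b : Fin N1) : Fin (N0 * N1) :=
  ⟨N1 * a + b, by
    have ha : (a : ℕ) + 1 ≤ N0 := a.isLt
    have hb : (b : ℕ) < N1 := b.isLt
    calc N1 * (a : ℕ) + (b : ℕ) < N1 * (a : ℕ) + N1 := by omega
      _ = N1 * ((a : ℕ) + 1) := by ring
      _ ≤ N1 * N0 := Nat.mul_le_mul_left _ ha
      _ = N0 * N1 := Nat.mul_comm _ _⟩

open Complex ComplexConjugate

noncomputable def fourierRoot (M : ℕ) : ℂ := exp (2 * Real.pi * I / M)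

lemma fourierRoot_ne_zero (M : ℕ) : fourierRoot M ≠ 0 := exp_ne_zero _

lemma conj_fourierRoot (M : ℕ) : conj (fourierRoot M) = (fourierRoot M)⁻¹ := by
  rw [fourierRoot, ← Complex.exp_conj, ← exp_neg]
  congr 1
  simp [map_div₀, map_ofNat, neg_div]

lemma conj_fourierRoot_pow (M n : ℕ) :
    conj (fourierRoot M ^ n) = fourierRoot M ^ (-(n : ℤ)) := by
  rw [map_pow, conj_fourierRoot, _root_.zpow_neg, zpow_natCast, inv_pow]

lemma conj_fourierRoot_pow_pow_mul_pow_pow (M i j m : ℕ) :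
    conj (fourierRoot M ^ i) ^ m * (fourierRoot M ^ j) ^ m =
      fourierRoot M ^ ((m : ℤ) * (j - i)) := by
  rw [conj_fourierRoot_pow, ← zpow_natCast, ← zpow_natCast, ← zpow_natCast, ← _root_.zpow_mul,
    ← _root_.zpow_mul, ← zpow_add₀ (fourierRoot_ne_zero M)]
  ring_nf

lemma fourierRoot_pow_self (M : ℕ) : fourierRoot M ^ M = 1 := by
  rcases eq_or_ne M 0 with rfl | hM
  · simp [fourierRoot]
  · exact (isPrimitiveRoot_exp M hM).pow_eq_one

lemma fourierRoot_zpow_natCast_mul (M : ℕ) (n : ℤ) : fourierRoot M ^ ((M : ℤ) * n) = 1 := by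
  rw [_root_.zpow_mul, zpow_natCast, fourierRoot_pow_self, _root_.one_zpow]

lemma fourierRoot_mul_pow_right (N0 : ℕ) {N1 : ℕ} (h1 : N1 ≠ 0) :
    fourierRoot (N0 * N1) ^ N1 = fourierRoot N0 := by
  rw [fourierRoot, fourierRoot, ← exp_nat_mul, Nat.cast_mul, mul_div_assoc', mul_comm,
    mul_div_mul_right _ _ (Nat.cast_ne_zero.mpr h1)]

lemma fourierRoot_mul_pow_left {N0 : ℕ} (N1 : ℕ) (h0 : N0 ≠ 0) :
    fourierRoot (N0 * N1) ^ N0 = fourierRoot N1 := by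
  rw [Nat.mul_comm]
  exact fourierRoot_mul_pow_right N1 h0

lemma fourierRoot_mul_zpow_mixedRadix {N0 N1 : ℕ} (h0 : N0 ≠ 0) (h1 : N1 ≠ 0) (m s x y : ℤ) :
    fourierRoot (N0 * N1) ^ ((m + N0 * s) * (N1 * x + y)) =
      fourierRoot N0 ^ (m * x) * fourierRoot (N0 * N1) ^ (m * y) * fourierRoot N1 ^ (s * y) := by
  have hexp : (m + N0 * s) * (N1 * x + y) =
      N1 * (m * x) + m * y + N0 * (s * y) + ((N0 * N1 : ℕ) : ℤ) * (s * x) := by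
    push_cast
    ring
  rw [hexp, zpow_add₀ (fourierRoot_ne_zero _), fourierRoot_zpow_natCast_mul, mul_one,
    zpow_add₀ (fourierRoot_ne_zero _), zpow_add₀ (fourierRoot_ne_zero _), _root_.zpow_mul,
    _root_.zpow_mul _ (N0 : ℤ), zpow_natCast, zpow_natCast, fourierRoot_mul_pow_right N0 h1,
    fourierRoot_mul_pow_left N1 h0]

lemma sum_fourierRoot_zpow_mul_sub {M : ℕ} (b d : Fin M) :
    ∑ s : Fin M, fourierRoot M ^ ((s : ℤ) * (d - b)) = if b = d then (M : ℂ) else 0 := by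
  obtain ⟨β, hβ⟩ : ∃ β, β = fourierRoot M ^ ((d : ℤ) - b) := ⟨_, rfl⟩
  have hpow (s : ℕ) : fourierRoot M ^ ((s : ℤ) * (d - b)) = β ^ s := by
    rw [hβ, mul_comm, _root_.zpow_mul, zpow_natCast]
  simp only [hpow]
  split_ifs with hbd
  · simp [hβ, hbd]
  have hβ_ne_one : β ≠ 1 := by
    rw [Ne, hβ, fourierRoot, (isPrimitiveRoot_exp M (Fin.pos b).ne').zpow_eq_one_iff_dvd]
    intro hdvd
    have := Int.eq_zero_of_abs_lt_dvd hdvd (by rw [abs_lt]; omega)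
    exact hbd (Fin.ext (by omega))
  have hβ_pow : β ^ M = 1 := by
    rw [hβ, ← zpow_natCast, ← _root_.zpow_mul, mul_comm, fourierRoot_zpow_natCast_mul]
  rw [Fin.sum_univ_eq_sum_range (β ^ ·), geom_sum_eq hβ_ne_one, hβ_pow, sub_self, zero_div]

lemma star_qft_mul_qft (M : ℕ) (t j k : Fin M) :
    star (qft M t j) * qft M t k = fourierRoot M ^ ((t : ℤ) * (k - j)) / M := by
  have hsqrt : ((√M : ℝ) : ℂ) * (√M : ℝ) = M := by
    rw [← ofReal_mul, Real.mul_self_sqrt (Nat.cast_nonneg M), ofReal_natCast]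
  rw [qft, qft, star_def, map_div₀, conj_ofReal, ← fourierRoot, conj_fourierRoot_pow,
    div_mul_div_comm, hsqrt, ← zpow_natCast, ← zpow_add₀ (fourierRoot_ne_zero M)]
  push_cast
  ring_nf

lemma qpeMult_apply (M : ℕ) (j k : Fin M) :
    qpeMult M j k = ∑ t : Fin M, (t : ℂ) * fourierRoot M ^ ((t : ℤ) * (k - j)) / M := by
  rw [qpeMult, mul_apply]
  simp only [mul_diagonal, conjTranspose_apply, mul_div_assoc, ← star_qft_mul_qft]
  exact Finset.sum_congr rfl fun t _ => by ring

lemma sum_fin_mul_eq_sum_sum {β : Type*} [AddCommMonoid β] (N0 N1 : ℕ) (f : ℕ → β) :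
    ∑ t : Fin (N0 * N1), f t = ∑ m : Fin N0, ∑ s : Fin N1, f (m + N0 * s) := by
  rw [← (finProdFinEquiv.trans (finCongr (Nat.mul_comm N1 N0))).sum_comp,
    Fintype.sum_prod_type, Finset.sum_comm]
  rfl

lemma qpeMult_emb_apply_eq_sum_sum {N0 N1 : ℕ} (h0 : N0 ≠ 0) (h1 : N1 ≠ 0) (a c : Fin N0)
    (b d : Fin N1) :
    qpeMult (N0 * N1) (emb N0 N1 a b) (emb N0 N1 c d) =
      ∑ m : Fin N0, ∑ s : Fin N1, ((m : ℂ) + N0 * s) *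
        (fourierRoot N0 ^ ((m : ℤ) * (c - a)) * fourierRoot (N0 * N1) ^ ((m : ℤ) * (d - b)) *
          fourierRoot N1 ^ ((s : ℤ) * (d - b))) / (N0 * N1) := by
  rw [qpeMult_apply, sum_fin_mul_eq_sum_sum N0 N1 fun t => (t : ℂ) * fourierRoot (N0 * N1) ^
    ((t : ℤ) * ((emb N0 N1 c d : ℕ) - (emb N0 N1 a b : ℕ))) / (N0 * N1 : ℕ)]
  refine Finset.sum_congr rfl fun m _ => Finset.sum_congr rfl fun s _ => ?_
  have hexp : ((m + N0 * s : ℕ) : ℤ) * ((emb N0 N1 c d : ℕ) - (emb N0 N1 a b : ℕ)) =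
      (m + N0 * s) * (N1 * (c - a) + (d - b)) := by
    simp only [emb]
    push_cast
    ring
  rw [hexp, fourierRoot_mul_zpow_mixedRadix h0 h1]
  push_cast
  ring

lemma qpeMult_emb_apply {N0 N1 : ℕ} (h0 : N0 ≠ 0) (h1 : N1 ≠ 0) (a c : Fin N0)
    (b d : Fin N1) :
    qpeMult (N0 * N1) (emb N0 N1 a b) (emb N0 N1 c d) =
      ∑ m : Fin N0, fourierRoot N0 ^ ((m : ℤ) * (c - a)) *
          fourierRoot (N0 * N1) ^ ((m : ℤ) * (d - b)) * qpeMult N1 b d +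
        qpeMult N0 a c * if b = d then 1 else 0 := by
  set A : Fin N0 → ℂ := fun m =>
    fourierRoot N0 ^ ((m : ℤ) * (c - a)) * fourierRoot (N0 * N1) ^ ((m : ℤ) * (d - b))
  set B : Fin N1 → ℂ := fun s => fourierRoot N1 ^ ((s : ℤ) * (d - b))
  have hsplit : qpeMult (N0 * N1) (emb N0 N1 a b) (emb N0 N1 c d) =
      ∑ m : Fin N0, ∑ s : Fin N1, ((m : ℂ) + N0 * s) * (A m * B s) / (N0 * N1) :=
    qpeMult_emb_apply_eq_sum_sum h0 h1 a c b d
  have hB : ∑ s, B s = if b = d then (N1 : ℂ) else 0 := sum_fourierRoot_zpow_mul_sub b d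
  have hQ1 : ∑ s : Fin N1, (s : ℂ) * B s / N1 = qpeMult N1 b d := (qpeMult_apply N1 b d).symm
  have hQ0 : b = d → ∑ m : Fin N0, (m : ℂ) * A m / N0 = qpeMult N0 a c := by
    rintro rfl
    simp [A, qpeMult_apply N0 a c]
  have hN1 : (N1 : ℂ) ≠ 0 := Nat.cast_ne_zero.mpr h1
  calc qpeMult (N0 * N1) (emb N0 N1 a b) (emb N0 N1 c d)
      = (∑ m, A m) * (∑ s : Fin N1, (s : ℂ) * B s / N1) +
          (∑ m : Fin N0, (m : ℂ) * A m / N0) * (∑ s, B s) / N1 := by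
        rw [hsplit, add_comm]
        simp only [add_mul, add_div, Finset.sum_add_distrib, Finset.sum_mul_sum, Finset.sum_div]
        congr 1
        all_goals refine Finset.sum_congr rfl fun m _ => Finset.sum_congr rfl fun s _ => ?_
        all_goals field_simp
    _ = _ := by
      rw [hQ1, hB, Finset.sum_mul]
      split_ifs with hbd
      · rw [hQ0 hbd, mul_div_assoc, div_self hN1]
      · rw [mul_zero, zero_div, add_zero, mul_zero, add_zero]

lemma conjTranspose_diagonal_pow_mul_mul_diagonal_pow_apply {n R : Type*} [Fintype n]
    [DecidableEq n] [CommSemiring R] [StarRing R] (f : n → R) (A : Matrix n n R) (k : ℕ)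
    (i j : n) :
    ((diagonal f)ᴴ ^ k * A * diagonal f ^ k) i j = star (f i) ^ k * A i j * f j ^ k := by
  rw [diagonal_conjTranspose, diagonal_pow, diagonal_pow, mul_diagonal, diagonal_mul]
  rfl

theorem qpe_multiplier_recursive_decomposition
    (N0 N1 : ℕ) (h0 : 0 < N0) (h1 : 0 < N1)
    (ω : ℂ) (hω : ω = Complex.exp (2 * Real.pi * Complex.I / (N0 * N1 : ℕ)))
    (D : Matrix (Fin N1) (Fin N1) ℂ)
    (hD : D = Matrix.diagonal (fun j : Fin N1 => ω ^ (j : ℕ)))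
    (v : Fin N0 → Fin N0 → ℂ)
    (hv : ∀ m j, v m j = (ω ^ (N1 * (j : ℕ) * (m : ℕ)))⁻¹ / Real.sqrt N0) :
    (qpeMult (N0 * N1)).submatrix
        (fun p : Fin N0 × Fin N1 => emb N0 N1 p.1 p.2)
        (fun p : Fin N0 × Fin N1 => emb N0 N1 p.1 p.2) =
      (N0 : ℂ) • (∑ m : Fin N0,
        (Matrix.vecMulVec (v m) fun k => (starRingEnd ℂ) (v m k)) ⊗ₖ
          ((Dᴴ) ^ (m : ℕ) * qpeMult N1 * D ^ (m : ℕ))) +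
        qpeMult N0 ⊗ₖ (1 : Matrix (Fin N1) (Fin N1) ℂ) := by
  replace hω : ω = fourierRoot (N0 * N1) := hω
  have hv_qft : ∀ m j, v m j = star (qft N0 m j) := by
    intro m j
    rw [hv, hω, mul_assoc, pow_mul, fourierRoot_mul_pow_right N0 h1.ne', qft, star_def,
      map_div₀, conj_ofReal, ← fourierRoot, map_pow, conj_fourierRoot, inv_pow, mul_comm (j : ℕ)]
  ext ⟨a, b⟩ ⟨c, d⟩
  simp only [submatrix_apply, Matrix.add_apply, Matrix.smul_apply, Matrix.sum_apply,
    kroneckerMap_apply, vecMulVec_apply, one_apply, smul_eq_mul, hD, star_def,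
    conjTranspose_diagonal_pow_mul_mul_diagonal_pow_apply, hv_qft, conj_conj]
  rw [qpeMult_emb_apply h0.ne' h1.ne', Finset.mul_sum]
  congr 1
  refine Finset.sum_congr rfl fun m _ => ?_
  rw [← star_def, star_qft_mul_qft, hω,
    ← conj_fourierRoot_pow_pow_mul_pow_pow (N0 * N1) b d m, star_def]
  field_simp [Nat.cast_ne_zero.mpr h0.ne']
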